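/- Let k = ℝ and α, β < 0. If |q| > 2√(αβ) then C_q ≅ M₂(ℝ), and if |q| < 2√(αβ) then C_q ≅ ℍ, the real quaternion algebra. -/

import Mathlib

open FreeAlgebra

/-- Relations for `C_q = ℝ⟨x,y⟩/(x² − α, y² − β, xy + yx − q)`. -/
inductive CRel (α β q : ℝ) :
    FreeAlgebra ℝ (Fin 2) → FreeAlgebra ℝ (Fin 2) → Prop
  | xx : CRel α β q (ι ℝ 0 * ι ℝ 0) (algebraMap ℝ _ α)
  | yy : CRel α β q (ι ℝ 1 * ι ℝ 1) (algebraMap ℝ _ β)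
  | mix : CRel α β q (ι ℝ 0 * ι ℝ 1 + ι ℝ 1 * ι ℝ 0) (algebraMap ℝ _ q)

/-!
Completing the square: for `α ≠ 0` the element `j = y − (q / 2α) x` satisfies
`j² = β − q² / 4α` and `x j = − j x`, so `C_q` is the quaternion algebra `(α, β − q² / 4α)`.
Rescaling the generators multiplies the structure constants by nonzero squares, so over `ℝ` only
their signs matter: two negative constants give `ℍ`, while a positive one splits the algebra, which
is then realised as `M₂(ℝ)` by `i ↦ [[0, c], [1, 0]]`, `j ↦ diag(1, −1)`. Since `α < 0`, the sign
of `β − q² / 4α` is that of `q² − 4αβ`.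
-/

open Quaternion QuaternionAlgebra

noncomputable section

namespace QuaternionAlgebra

variable {R K : Type*} [CommRing R] [Field K]

@[simps i j k]
def Basis.rescale {c₁ c₃ d₁ d₃ : R} (u v : R) (h₁ : d₁ = u ^ 2 * c₁) (h₃ : d₃ = v ^ 2 * c₃) :
    Basis ℍ[R, c₁, c₃] d₁ 0 d₃ where
  i := ⟨0, u, 0, 0⟩
  j := ⟨0, 0, v, 0⟩
  k := ⟨0, 0, 0, u * v⟩
  i_mul_i := by ext <;> simp [h₁]; ring
  j_mul_j := by ext <;> simp [h₃]; ring
  i_mul_j := by ext <;> simp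
  j_mul_i := by ext <;> simp; ring

def rescaleEquiv {c₁ c₃ d₁ d₃ : K} {u v : K} (hu : u ≠ 0) (hv : v ≠ 0)
    (h₁ : d₁ = u ^ 2 * c₁) (h₃ : d₃ = v ^ 2 * c₃) : ℍ[K, d₁, d₃] ≃ₐ[K] ℍ[K, c₁, c₃] :=
  AlgEquiv.ofAlgHom (Basis.rescale u v h₁ h₃).liftHom
    (Basis.rescale u⁻¹ v⁻¹ (by rw [h₁]; field_simp) (by rw [h₃]; field_simp)).liftHom
    (by ext <;> simp [Basis.lift, hu, hv]) (by ext <;> simp [Basis.lift, hu, hv])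

def equivQuaternionOfNeg {c₁ c₃ : ℝ} (h₁ : c₁ < 0) (h₃ : c₃ < 0) : ℍ[ℝ, c₁, c₃] ≃ₐ[ℝ] ℍ[ℝ] :=
  rescaleEquiv (u := √(-c₁)) (v := √(-c₃)) (Real.sqrt_ne_zero'.2 (by linarith))
    (Real.sqrt_ne_zero'.2 (by linarith))
    (by rw [Real.sq_sqrt (by linarith)]; ring) (by rw [Real.sq_sqrt (by linarith)]; ring)

@[simps i j k]
def Basis.matrix (c : K) : Basis (Matrix (Fin 2) (Fin 2) K) c 0 1 where
  i := !![0, c; 1, 0]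
  j := !![1, 0; 0, -1]
  k := !![0, -c; 1, 0]
  i_mul_i := by ext i j; fin_cases i <;> fin_cases j <;> simp
  j_mul_j := by ext i j; fin_cases i <;> fin_cases j <;> simp
  i_mul_j := by ext i j; fin_cases i <;> fin_cases j <;> simp
  j_mul_i := by ext i j; fin_cases i <;> fin_cases j <;> simp

lemma Basis.matrix_liftHom_apply (c : K) (x : ℍ[K, c, 1]) :
    (Basis.matrix c).liftHom x =
      !![x.re + x.imJ, c * (x.imI - x.imK); x.imI + x.imK, x.re - x.imJ] := by
  ext i j
  fin_cases i <;> fin_cases j <;>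
    simp [Basis.lift, Algebra.algebraMap_eq_smul_one] <;> ring

lemma Basis.matrix_liftHom_injective [NeZero (2 : K)] {c : K} (hc : c ≠ 0) :
    Function.Injective (Basis.matrix c).liftHom := by
  refine (injective_iff_map_eq_zero _).2 fun x hx => ?_
  rw [matrix_liftHom_apply, ← Matrix.ext_iff] at hx
  have h00 := hx 0 0
  have h01 := hx 0 1
  have h10 := hx 1 0
  have h11 := hx 1 1
  simp only [Fin.isValue, Matrix.of_apply, Matrix.cons_val', Matrix.cons_val_zero,
    Matrix.cons_val_one, Matrix.empty_val', Matrix.cons_val_fin_one, Matrix.zero_apply,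
    mul_eq_zero, hc, false_or] at h00 h01 h10 h11
  have h2 : (2 : K) ≠ 0 := two_ne_zero
  ext
  · exact mul_left_cancel₀ h2 (by linear_combination h00 + h11 : 2 * x.re = 2 * 0)
  · exact mul_left_cancel₀ h2 (by linear_combination h01 + h10 : 2 * x.imI = 2 * 0)
  · exact mul_left_cancel₀ h2 (by linear_combination h00 - h11 : 2 * x.imJ = 2 * 0)
  · exact mul_left_cancel₀ h2 (by linear_combination h10 - h01 : 2 * x.imK = 2 * 0)

def equivMatrix [NeZero (2 : K)] {c : K} (hc : c ≠ 0) :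
    ℍ[K, c, 1] ≃ₐ[K] Matrix (Fin 2) (Fin 2) K :=
  have hinj := Basis.matrix_liftHom_injective hc
  AlgEquiv.ofBijective (Basis.matrix c).liftHom ⟨hinj,
    (LinearMap.injective_iff_surjective_of_finrank_eq_finrank
      (f := (Basis.matrix c).liftHom.toLinearMap)
      (by simp [finrank_eq_four, Module.finrank_matrix])).1 hinj⟩

def equivMatrixOfPos {c₁ c₃ : ℝ} (h₁ : c₁ ≠ 0) (h₃ : 0 < c₃) :
    ℍ[ℝ, c₁, c₃] ≃ₐ[ℝ] Matrix (Fin 2) (Fin 2) ℝ :=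
  (rescaleEquiv (u := 1) (v := √c₃) one_ne_zero (Real.sqrt_ne_zero'.2 h₃) (by ring)
    (by rw [Real.sq_sqrt h₃.le, mul_one])).trans (equivMatrix h₁)

end QuaternionAlgebra

abbrev Cq (α β q : ℝ) := RingQuot (CRel α β q)

namespace Cq

variable {α β q : ℝ} {A : Type*} [Ring A] [Algebra ℝ A]

def x : Cq α β q := RingQuot.mkAlgHom ℝ (CRel α β q) (ι ℝ 0)

def y : Cq α β q := RingQuot.mkAlgHom ℝ (CRel α β q) (ι ℝ 1)

lemma x_mul_x : (x : Cq α β q) * x = algebraMap ℝ _ α := by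
  simpa [x] using RingQuot.mkAlgHom_rel ℝ (CRel.xx (α := α) (β := β) (q := q))

lemma y_mul_y : (y : Cq α β q) * y = algebraMap ℝ _ β := by
  simpa [y] using RingQuot.mkAlgHom_rel ℝ (CRel.yy (α := α) (β := β) (q := q))

lemma x_mul_y_add_y_mul_x : (x : Cq α β q) * y + y * x = algebraMap ℝ _ q := by
  simpa [x, y] using RingQuot.mkAlgHom_rel ℝ (CRel.mix (α := α) (β := β) (q := q))

def lift (X Y : A) (hX : X * X = algebraMap ℝ A α) (hY : Y * Y = algebraMap ℝ A β)
    (hXY : X * Y + Y * X = algebraMap ℝ A q) : Cq α β q →ₐ[ℝ] A :=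
  RingQuot.liftAlgHom ℝ ⟨FreeAlgebra.lift ℝ ![X, Y], by rintro _ _ ⟨⟩ <;> simp [hX, hY, hXY]⟩

section lift

variable (X Y : A) (hX : X * X = algebraMap ℝ A α) (hY : Y * Y = algebraMap ℝ A β)
  (hXY : X * Y + Y * X = algebraMap ℝ A q)

@[simp] lemma lift_x : lift X Y hX hY hXY x = X := by simp [lift, x]

@[simp] lemma lift_y : lift X Y hX hY hXY y = Y := by simp [lift, y]

end lift

lemma algHom_ext {f g : Cq α β q →ₐ[ℝ] A} (hx : f x = g x) (hy : f y = g y) : f = g :=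
  RingQuot.ringQuot_ext' ℝ _ _ <| FreeAlgebra.hom_ext <| funext fun i => by
    fin_cases i
    exacts [hx, hy]

@[simps i j k]
def quaternionBasis (hα : α ≠ 0) : Basis (Cq α β q) α 0 (β - q ^ 2 / (4 * α)) where
  i := x
  j := y - (q / (2 * α)) • x
  k := x * (y - (q / (2 * α)) • x)
  i_mul_i := by rw [x_mul_x, Algebra.algebraMap_eq_smul_one, zero_smul, add_zero]
  j_mul_j := by
    have : (y - (q / (2 * α)) • x) * (y - (q / (2 * α)) • x) =
        y * y - (q / (2 * α)) • (x * y + y * x) + (q / (2 * α)) ^ 2 • (x * x : Cq α β q) := by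
      simp only [sub_mul, mul_sub, smul_mul_assoc, mul_smul_comm, smul_sub, smul_add, smul_smul]
      module
    rw [this, x_mul_x, y_mul_y, x_mul_y_add_y_mul_x]
    simp only [Algebra.algebraMap_eq_smul_one, smul_smul]
    match_scalars
    field_simp
    ring
  i_mul_j := rfl
  j_mul_i := by
    rw [zero_smul, zero_sub, eq_neg_iff_add_eq_zero]
    have : (y - (q / (2 * α)) • x) * x + x * (y - (q / (2 * α)) • x) =
        (x * y + y * x) - (q / α) • (x * x : Cq α β q) := by
      simp only [sub_mul, mul_sub, smul_mul_assoc, mul_smul_comm]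
      module
    rw [this, x_mul_x, x_mul_y_add_y_mul_x]
    simp only [Algebra.algebraMap_eq_smul_one, smul_smul]
    rw [div_mul_cancel₀ _ hα, sub_self]

def equivQuaternionAlgebra (hα : α ≠ 0) : Cq α β q ≃ₐ[ℝ] ℍ[ℝ, α, β - q ^ 2 / (4 * α)] :=
  AlgEquiv.ofAlgHom
    (lift ⟨0, 1, 0, 0⟩ ⟨0, q / (2 * α), 1, 0⟩ (by ext <;> simp)
      (by ext <;> simp; field_simp; ring) (by ext <;> simp; field_simp; ring))
    (quaternionBasis hα).liftHom
    (by ext <;> simp [Basis.lift])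
    (algHom_ext (by simp [Basis.lift]) (by simp [Basis.lift]))

end Cq

end

lemma sub_sq_div_neg_of_abs_lt_two_sqrt {α β q : ℝ} (hα : α < 0) (h : |q| < 2 * √(α * β)) :
    β - q ^ 2 / (4 * α) < 0 := by
  have hq : (|q| / 2) ^ 2 < α * β := (Real.lt_sqrt (by positivity)).1 (by linarith)
  rw [sub_neg, lt_div_iff_of_neg (by linarith)]
  nlinarith [sq_abs q]

lemma sub_sq_div_pos_of_two_sqrt_lt_abs {α β q : ℝ} (hα : α < 0) (h : 2 * √(α * β) < |q|) :
    0 < β - q ^ 2 / (4 * α) := by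
  have hq : α * β < (|q| / 2) ^ 2 :=
    (Real.sqrt_lt' (by linarith [Real.sqrt_nonneg (α * β)])).1 (by linarith)
  rw [sub_pos, div_lt_iff_of_neg (by linarith)]
  nlinarith [sq_abs q]

theorem stmt16_general (α β q : ℝ) (hα : α < 0) :
    (|q| > 2 * Real.sqrt (α * β) →
      Nonempty (RingQuot (CRel α β q) ≃ₐ[ℝ] Matrix (Fin 2) (Fin 2) ℝ)) ∧
    (|q| < 2 * Real.sqrt (α * β) →
      Nonempty (RingQuot (CRel α β q) ≃ₐ[ℝ] Quaternion ℝ)) :=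
  ⟨fun h => ⟨(Cq.equivQuaternionAlgebra hα.ne).trans
      (equivMatrixOfPos hα.ne (sub_sq_div_pos_of_two_sqrt_lt_abs hα h))⟩,
    fun h => ⟨(Cq.equivQuaternionAlgebra hα.ne).trans
      (equivQuaternionOfNeg hα (sub_sq_div_neg_of_abs_lt_two_sqrt hα h))⟩⟩

/-- For `k = ℝ` and `α, β < 0`: if `|q| > 2√(αβ)` then `C_q ≅ M₂(ℝ)`, and if
`|q| < 2√(αβ)` then `C_q ≅ ℍ`, Hamilton's quaternions. -/
theorem stmt16 (α β q : ℝ) (hα : α < 0) (hβ : β < 0) :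
    (|q| > 2 * Real.sqrt (α * β) →
      Nonempty (RingQuot (CRel α β q) ≃ₐ[ℝ] Matrix (Fin 2) (Fin 2) ℝ)) ∧
    (|q| < 2 * Real.sqrt (α * β) →
      Nonempty (RingQuot (CRel α β q) ≃ₐ[ℝ] Quaternion ℝ)) :=
  stmt16_general α β q hα
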